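/- arXiv:1409.7004 — 4 statements merged into one kernel-verified Lean document; each statement's English description precedes it below -/
import Mathlib

section
/- Let n ≥ 4 and let <_τ be a monomial order on ℕ^n such that for every i with 1 ≤ i ≤ n, the i-th induced ordering of <_τ equals the i-th induced ordering of the lexicographic order. Then <_τ is the lexicographic order on ℕ^n. -/
/-!
Both relations are strict total orders, so it suffices to show that `a <_lex b` implies `r a b`.
Translating by `a₀ e₀` leaves two cases. If `a₀ = b₀`, both vectors lie in the face `x₀ = 0`,
where `r` is lex by hypothesis. If `a₀ < b₀`, then `a` lies in the face `x₀ = 0` and `e₀ ≤ b`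
componentwise, so `e₀ ≤_r b`; and `a <_r e₀`, since `a <_lex N e₁` in the face `x₀ = 0` (for
`N > a₁`) and `N e₁ <_lex e₀` in a third face `x_k = 0`.
-/

open Matrix BigOperators

def lexLt {n : ℕ} {α : Type*} [LinearOrder α] (a b : Fin n → α) : Prop :=
  ∃ i : Fin n, a i < b i ∧ ∀ j : Fin n, j < i → a j = b j

def IsMonomialOrder {n : ℕ} (r : (Fin n → ℕ) → (Fin n → ℕ) → Prop) : Prop :=
  IsStrictTotalOrder (Fin n → ℕ) r ∧
  (∀ a : Fin n → ℕ, a ≠ 0 → r 0 a) ∧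
  (∀ a b c : Fin n → ℕ, r a b → r (a + c) (b + c))

def degLexLt {n : ℕ} (a b : Fin n → ℕ) : Prop :=
  (∑ i, a i) < (∑ i, b i) ∨ ((∑ i, a i) = (∑ i, b i) ∧ lexLt a b)

def revLexLt {n : ℕ} (a b : Fin n → ℕ) : Prop :=
  (∑ i, a i) < (∑ i, b i) ∨
  ((∑ i, a i) = (∑ i, b i) ∧ ∃ i : Fin n, b i < a i ∧ ∀ j : Fin n, i < j → a j = b j)

theorem iff_of_imp_of_asymm_of_trichotomous {α : Type*} {r s : α → α → Prop}
    (hr : ∀ a b, r a b → ¬r b a) (hs : ∀ a b, s a b ∨ a = b ∨ s b a)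
    (hsr : ∀ a b, s a b → r a b) (a b : α) : r a b ↔ s a b := by
  refine ⟨fun hab => ?_, hsr a b⟩
  rcases hs a b with h | rfl | h
  · exact h
  · exact absurd hab (hr a a hab)
  · exact absurd (hsr b a h) (hr a b hab)

theorem Pi.single_le_iff {ι M : Type*} [DecidableEq ι] [AddMonoid M] [PartialOrder M]
    [CanonicallyOrderedAdd M] {i : ι} {x : M} {f : ι → M} :
    Pi.single i x ≤ f ↔ x ≤ f i := by
  refine ⟨fun h => by simpa using h i, fun h j => ?_⟩
  rcases eq_or_ne j i with rfl | hj
  · simpa using h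
  · simp [Pi.single_eq_of_ne hj]

section Lex

variable {n : ℕ} {α : Type*} [LinearOrder α]

theorem lexLt_iff_toLex_lt {a b : Fin n → α} : lexLt a b ↔ toLex a < toLex b :=
  exists_congr fun _ => and_comm

theorem lexLt_trichotomous (a b : Fin n → α) : lexLt a b ∨ a = b ∨ lexLt b a := by
  rw [lexLt_iff_toLex_lt, lexLt_iff_toLex_lt, ← toLex_inj]
  exact lt_trichotomy _ _

theorem lexLt_add_right_iff [AddCommMonoid α] [IsOrderedCancelAddMonoid α] {a b : Fin n → α}
    (c : Fin n → α) : lexLt (a + c) (b + c) ↔ lexLt a b := by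
  simp only [lexLt_iff_toLex_lt, toLex_add, add_lt_add_iff_right]

theorem lexLt.apply_zero_le [NeZero n] {a b : Fin n → α} (h : lexLt a b) : a 0 ≤ b 0 :=
  Pi.apply_le_of_toLex (lexLt_iff_toLex_lt.1 h).le fun j hj => absurd hj (Fin.not_lt_zero j)

end Lex

namespace IsMonomialOrder

variable {n : ℕ} {r : (Fin n → ℕ) → (Fin n → ℕ) → Prop}

theorem trans (hr : IsMonomialOrder r) {a b c : Fin n → ℕ} : r a b → r b c → r a c :=
  hr.1.trans a b c

theorem zero_lt (hr : IsMonomialOrder r) {a : Fin n → ℕ} (ha : a ≠ 0) : r 0 a :=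
  hr.2.1 a ha

theorem add_right (hr : IsMonomialOrder r) {a b : Fin n → ℕ} (hab : r a b) (c : Fin n → ℕ) :
    r (a + c) (b + c) :=
  hr.2.2 a b c hab

theorem asymm (hr : IsMonomialOrder r) {a b : Fin n → ℕ} : r a b → ¬r b a :=
  fun hab hba => hr.1.irrefl a (hr.trans hab hba)

theorem eq_or_lt_of_le (hr : IsMonomialOrder r) {a b : Fin n → ℕ} (hab : a ≤ b) :
    a = b ∨ r a b := by
  rcases eq_or_ne (b - a) 0 with h | h
  · exact .inl (le_antisymm hab (tsub_eq_zero_iff_le.1 h))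
  · right
    simpa [tsub_add_cancel_of_le hab] using hr.add_right (hr.zero_lt h) a

end IsMonomialOrder

def HasLexInducedOrders {n : ℕ} (r : (Fin n → ℕ) → (Fin n → ℕ) → Prop) : Prop :=
  ∀ i : Fin n, ∀ a b : Fin n → ℕ, a i = 0 → b i = 0 → (r a b ↔ lexLt a b)

namespace HasLexInducedOrders

variable {m : ℕ} {r : (Fin (m + 2) → ℕ) → (Fin (m + 2) → ℕ) → Prop} {k : Fin (m + 2)}

theorem lt_single_zero (hind : HasLexInducedOrders r) (hr : IsMonomialOrder r)
    (hk₀ : k ≠ 0) (hk₁ : k ≠ 1) {v : Fin (m + 2) → ℕ} (hv : v 0 = 0) :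
    r v (Pi.single 0 1) := by
  have hv_lt : r v (Pi.single 1 (v 1 + 1)) :=
    (hind 0 _ _ hv (by simp)).2
      ⟨1, by simp, fun j hj => by rw [(Fin.lt_one_iff j).1 hj, hv]; simp⟩
  have hlt_single : r (Pi.single 1 (v 1 + 1)) (Pi.single 0 1) :=
    (hind k _ _ (by simp [hk₁]) (by simp [hk₀])).2
      ⟨0, by simp, fun j hj => absurd hj (Fin.not_lt_zero j)⟩
  exact hr.trans hv_lt hlt_single

theorem lt_of_lexLt (hind : HasLexInducedOrders r) (hr : IsMonomialOrder r)
    (hk₀ : k ≠ 0) (hk₁ : k ≠ 1) {a b : Fin (m + 2) → ℕ} (hab : lexLt a b) : r a b := by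
  set c : Fin (m + 2) → ℕ := Pi.single 0 (a 0)
  have hca : c ≤ a := Pi.single_le_iff.2 le_rfl
  have hcb : c ≤ b := Pi.single_le_iff.2 hab.apply_zero_le
  suffices h : r (a - c) (b - c) by
    simpa [tsub_add_cancel_of_le hca, tsub_add_cancel_of_le hcb] using hr.add_right h c
  have ha₀ : (a - c) 0 = 0 := by simp [c]
  have hlex : lexLt (a - c) (b - c) := by
    rwa [← lexLt_add_right_iff c, tsub_add_cancel_of_le hca, tsub_add_cancel_of_le hcb]
  rcases hab.apply_zero_le.eq_or_lt with h₀ | h₀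
  · exact (hind 0 _ _ ha₀ (by simp [c, h₀])).2 hlex
  · have hsingle : Pi.single 0 1 ≤ b - c :=
      Pi.single_le_iff.2 (by simp [c, Nat.one_le_iff_ne_zero, Nat.sub_ne_zero_of_lt h₀])
    rcases hr.eq_or_lt_of_le hsingle with heq | hlt
    · exact heq ▸ hind.lt_single_zero hr hk₀ hk₁ ha₀
    · exact hr.trans (hind.lt_single_zero hr hk₀ hk₁ ha₀) hlt

end HasLexInducedOrders

/-- If `n ≥ 4` and all induced orderings of a monomial order agree with those of
the lexicographic order, then the order is the lexicographic order. -/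
theorem stmt_4 {n : ℕ} (hn : 4 ≤ n) (r : (Fin n → ℕ) → (Fin n → ℕ) → Prop)
    (hr : IsMonomialOrder r)
    (hind : ∀ i : Fin n, ∀ a b : Fin n → ℕ, a i = 0 → b i = 0 → (r a b ↔ lexLt a b)) :
    ∀ a b : Fin n → ℕ, r a b ↔ lexLt a b := by
  obtain ⟨m, rfl⟩ : ∃ m, n = m + 2 := ⟨n - 2, by omega⟩
  have hk₀ : (⟨2, by omega⟩ : Fin (m + 2)) ≠ 0 := by simp [Fin.ext_iff]
  have hk₁ : (⟨2, by omega⟩ : Fin (m + 2)) ≠ 1 := by simp [Fin.ext_iff]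
  exact iff_of_imp_of_asymm_of_trichotomous (fun _ _ => hr.asymm) lexLt_trichotomous
    fun _ _ => HasLexInducedOrders.lt_of_lexLt hind hr hk₀ hk₁
end

section
/- Let n ≥ 4 and let <_τ be a monomial order on ℕ^n such that for every i with 1 ≤ i ≤ n, the i-th induced ordering of <_τ equals the i-th induced ordering of the reverse lexicographic order. Then <_τ is the reverse lexicographic order on ℕ^n. -/
open Matrix BigOperators

/-! Both orders are invariant under translation, so it suffices to compare monomials `A`, `B`
with disjoint supports. If they have a common zero coordinate, the hypothesis compares them
directly. Otherwise their supports are complementary, and one exhibits a monomial `c` strictly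
between them for revlex that has a common zero coordinate with `A` and one with `B`; the
hypothesis then gives `A < c < B` for the monomial order too. -/

lemma exists_last_ne {ι β : Type*} [LinearOrder ι] [Fintype ι] {a b : ι → β} (h : a ≠ b) :
    ∃ i, a i ≠ b i ∧ ∀ j, i < j → a j = b j := by
  classical
  obtain ⟨i, hi⟩ := Function.ne_iff.mp h
  obtain ⟨m, hm, hmax⟩ :=
    (Finset.univ.filter fun j => a j ≠ b j).exists_max_image id ⟨i, by simpa using hi⟩
  refine ⟨m, (Finset.mem_filter.mp hm).2, fun j hj => by_contra fun hne => ?_⟩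
  exact (hmax j (by simpa using hne)).not_gt hj

lemma exists_two_lt_avoiding {ι : Type*} [LinearOrder ι] [Fintype ι] (hι : 4 ≤ Fintype.card ι)
    (q r : ι) : ∃ p m, p < m ∧ p ≠ q ∧ p ≠ r ∧ m ≠ q ∧ m ≠ r := by
  have hcard : 1 < (Finset.univ \ {q, r}).card := by
    have := Finset.card_le_two (a := q) (b := r)
    rw [Finset.card_sdiff_of_subset (Finset.subset_univ _), Finset.card_univ]
    omega
  obtain ⟨x, hx, y, hy, hxy⟩ := Finset.one_lt_card.mp hcard
  simp only [Finset.mem_sdiff, Finset.mem_univ, Finset.mem_insert, Finset.mem_singleton,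
    true_and, not_or] at hx hy
  rcases hxy.lt_or_gt with h | h
  · exact ⟨x, y, h, hx.1, hx.2, hy.1, hy.2⟩
  · exact ⟨y, x, h, hy.1, hy.2, hx.1, hx.2⟩

section RevLex

variable {n : ℕ}

lemma revLexLt_irrefl (a : Fin n → ℕ) : ¬ revLexLt a a := by
  rintro (h | ⟨-, i, h, -⟩) <;> exact h.false

lemma not_revLexLt_zero (a : Fin n → ℕ) : ¬ revLexLt a 0 := by
  rintro (h | ⟨h, i, hi, -⟩)
  · simp at h
  · simp only [Pi.zero_apply, Finset.sum_const_zero, Finset.sum_eq_zero_iff] at h hi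
    exact hi.ne' (h i (Finset.mem_univ i))

lemma sum_le_of_revLexLt {a b : Fin n → ℕ} (h : revLexLt a b) : ∑ j, a j ≤ ∑ j, b j := by
  rcases h with h | ⟨h, -⟩
  exacts [h.le, h.le]

lemma revLexLt_total {a b : Fin n → ℕ} (h : a ≠ b) : revLexLt a b ∨ revLexLt b a := by
  rcases lt_trichotomy (∑ i, a i) (∑ i, b i) with hs | hs | hs
  · exact Or.inl (Or.inl hs)
  · obtain ⟨i, hne, habove⟩ := exists_last_ne h
    rcases hne.lt_or_gt with hi | hi
    · exact Or.inr (Or.inr ⟨hs.symm, i, hi, fun j hj => (habove j hj).symm⟩)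
    · exact Or.inl (Or.inr ⟨hs, i, hi, habove⟩)
  · exact Or.inr (Or.inl hs)

lemma revLexLt_add_right_iff {a b c : Fin n → ℕ} :
    revLexLt (a + c) (b + c) ↔ revLexLt a b := by
  simp only [revLexLt, Pi.add_apply, Finset.sum_add_distrib, add_lt_add_iff_right, add_left_inj]

lemma revLexLt_of_lt_of_le {a b : Fin n → ℕ} (hsum : ∑ j, a j = ∑ j, b j) {i : Fin n}
    (hi : b i < a i) (hle : ∀ j, i < j → b j ≤ a j) : revLexLt a b := by
  obtain ⟨m, hm, habove⟩ := exists_last_ne (a := a) (b := b) (fun h => hi.ne' (congrFun h i))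
  refine Or.inr ⟨hsum, m, ?_, habove⟩
  rcases lt_trichotomy i m with him | rfl | hmi
  · exact (hle m him).lt_of_ne (Ne.symm hm)
  · exact hi
  · exact absurd (habove i hmi) hi.ne'

/-- With complementary supports, the last coordinates of two monomials of the same degree
differ, so that is where `revLexLt` compares them. -/
lemma lt_top_of_revLexLt [NeZero n] {A B : Fin n → ℕ} (hcompl : ∀ j, A j = 0 ↔ B j ≠ 0)
    (hsum : ∑ j, A j = ∑ j, B j) (h : revLexLt A B) : B ⊤ < A ⊤ := by
  rcases h with h | ⟨-, w, hw, habove⟩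
  · exact absurd hsum h.ne
  obtain rfl : w = ⊤ := by
    by_contra hne
    have := habove ⊤ (lt_top_iff_ne_top.mpr hne)
    have := hcompl ⊤
    omega
  exact hw

end RevLex

section Between

variable {n : ℕ} {A B : Fin n → ℕ}

lemma exists_between_of_not_single [NeZero n] (hcompl : ∀ j, A j = 0 ↔ B j ≠ 0) (hA : A ≠ 0)
    (hAB : revLexLt A B) {q t : Fin n} (hq : B q ≠ 0) (hqmax : ∀ j, q < j → B j = 0)
    (htq : t ≠ q) (ht : B t ≠ 0) :
    ∃ c, revLexLt A c ∧ revLexLt c B ∧ (∃ j, A j = 0 ∧ c j = 0) ∧ ∃ k, c k = 0 ∧ B k = 0 := by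
  set c : Fin n → ℕ := Pi.single q (∑ j, B j)
  have hc : ∀ j, j ≠ q → c j = 0 := fun j hj => Pi.single_eq_of_ne hj _
  have hcsum : ∑ j, c j = ∑ j, B j := Fintype.sum_pi_single' _ _
  obtain ⟨k, hk⟩ : ∃ k, A k ≠ 0 := Function.ne_iff.mp hA
  have hBk : B k = 0 := (hcompl k).not_left.mp hk
  refine ⟨c, ?_, ?_, ⟨t, (hcompl t).mpr ht, hc t htq⟩, ⟨k, hc k (fun h => hq (h ▸ hBk)), hBk⟩⟩
  · rcases (sum_le_of_revLexLt hAB).lt_or_eq with hlt | hsum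
    · exact Or.inl (hcsum ▸ hlt)
    have htop := lt_top_of_revLexLt hcompl hsum hAB
    have hctop : c ⊤ = 0 := hc ⊤ fun h => hq (h ▸ (hcompl ⊤).not_left.mp htop.ne_bot)
    exact revLexLt_of_lt_of_le (hsum.trans hcsum.symm) (i := ⊤) (hctop ▸ htop.ne_bot.bot_lt)
      fun j hj => absurd hj not_top_lt
  · refine Or.inr ⟨hcsum, q, ?_, fun j hj => by rw [hc j hj.ne', hqmax j hj]⟩
    rw [show c q = ∑ j, B j from Pi.single_eq_same _ _]
    exact Finset.single_lt_sum htq (Finset.mem_univ _) (Finset.mem_univ _) (Nat.pos_of_ne_zero ht)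
      fun _ _ _ => Nat.zero_le _

/-- The witness keeps the last coordinate of `A` and moves the rest of its degree to a
coordinate `p`: it stays above `A` and, in equal degree, below `B`, and `n ≥ 4` leaves room for
a common zero `m` with `B`. -/
lemma exists_between_of_single (hn : 4 ≤ n) (hcompl : ∀ j, A j = 0 ↔ B j ≠ 0)
    (hAB : revLexLt A B) {q : Fin n} (hq : B q ≠ 0) (hB : ∀ j, j ≠ q → B j = 0) :
    ∃ c, revLexLt A c ∧ revLexLt c B ∧ (∃ j, A j = 0 ∧ c j = 0) ∧ ∃ k, c k = 0 ∧ B k = 0 := by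
  have : NeZero n := ⟨by omega⟩
  obtain ⟨p, m, hpm, hpq, hptop, hmq, hmtop⟩ :=
    exists_two_lt_avoiding (by simpa using hn) q (⊤ : Fin n)
  set c : Fin n → ℕ := Pi.single ⊤ (A ⊤) + Pi.single p (∑ j, A j - A ⊤)
  have hcsum : ∑ j, c j = ∑ j, A j := by
    have := Finset.single_le_sum (fun j _ => Nat.zero_le (A j)) (Finset.mem_univ ⊤)
    simp only [c, Pi.add_apply, Finset.sum_add_distrib, Fintype.sum_pi_single']
    omega
  have hctop : c ⊤ = A ⊤ := by simp [c, hptop.symm]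
  have hcle : ∀ j, j ≠ p → c j ≤ A j := by
    intro j hjp
    rcases eq_or_ne j ⊤ with rfl | hjtop
    · exact hctop.le
    · simp [c, hjp, hjtop]
  have hcm : c m = 0 := by simp [c, hmtop, hpm.ne']
  have hAm : A m ≠ 0 := mt (hcompl m).mp (not_not.mpr (hB m hmq))
  have hAq : A q = 0 := (hcompl q).mpr hq
  refine ⟨c, ?_, ?_, ⟨q, hAq, Nat.eq_zero_of_le_zero (hAq ▸ hcle q hpq.symm)⟩, ⟨m, hcm, hB m hmq⟩⟩
  · exact revLexLt_of_lt_of_le hcsum.symm (i := m) (hcm ▸ Nat.pos_of_ne_zero hAm)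
      fun j hj => hcle j (hpm.trans hj).ne'
  · rcases (sum_le_of_revLexLt hAB).lt_or_eq with hlt | hsum
    · exact Or.inl (hcsum ▸ hlt)
    exact revLexLt_of_lt_of_le (hcsum.trans hsum) (i := ⊤)
      (hctop ▸ lt_top_of_revLexLt hcompl hsum hAB) fun j hj => absurd hj not_top_lt

lemma exists_revLexLt_between (hn : 4 ≤ n) (hcompl : ∀ j, A j = 0 ↔ B j ≠ 0) (hA : A ≠ 0)
    (hAB : revLexLt A B) :
    ∃ c, revLexLt A c ∧ revLexLt c B ∧ (∃ j, A j = 0 ∧ c j = 0) ∧ ∃ k, c k = 0 ∧ B k = 0 := by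
  have : NeZero n := ⟨by omega⟩
  have hB : B ≠ 0 := by
    rintro rfl
    exact not_revLexLt_zero A hAB
  obtain ⟨q, hq, hqmax⟩ := exists_last_ne hB
  by_cases hsingle : ∃ t, t ≠ q ∧ B t ≠ 0
  · obtain ⟨t, htq, ht⟩ := hsingle
    exact exists_between_of_not_single hcompl hA hAB hq hqmax htq ht
  · push Not at hsingle
    exact exists_between_of_single hn hcompl hAB hq hsingle

end Between

section MonomialOrder

variable {n : ℕ} {r : (Fin n → ℕ) → (Fin n → ℕ) → Prop}

lemma rel_of_revLexLt_of_disjoint (hn : 4 ≤ n) (hr : IsMonomialOrder r)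
    (hind : ∀ i : Fin n, ∀ a b : Fin n → ℕ, a i = 0 → b i = 0 → (r a b ↔ revLexLt a b))
    {A B : Fin n → ℕ} (hdisj : ∀ i, A i = 0 ∨ B i = 0) (hAB : revLexLt A B) : r A B := by
  have := hr.1
  by_cases hface : ∃ i, A i = 0 ∧ B i = 0
  · obtain ⟨i, hAi, hBi⟩ := hface
    exact (hind i A B hAi hBi).mpr hAB
  rcases eq_or_ne A 0 with rfl | hA
  · exact hr.2.1 B fun h => revLexLt_irrefl _ (h ▸ hAB)
  have hcompl : ∀ j, A j = 0 ↔ B j ≠ 0 := fun j =>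
    ⟨fun hAj hBj => hface ⟨j, hAj, hBj⟩, fun hBj => (hdisj j).resolve_right hBj⟩
  obtain ⟨c, hAc, hcB, ⟨j, hAj, hcj⟩, ⟨k, hck, hBk⟩⟩ := exists_revLexLt_between hn hcompl hA hAB
  exact _root_.trans ((hind j A c hAj hcj).mpr hAc) ((hind k c B hck hBk).mpr hcB)

lemma rel_of_revLexLt (hn : 4 ≤ n) (hr : IsMonomialOrder r)
    (hind : ∀ i : Fin n, ∀ a b : Fin n → ℕ, a i = 0 → b i = 0 → (r a b ↔ revLexLt a b))
    {a b : Fin n → ℕ} (hab : revLexLt a b) : r a b := by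
  have ha : a - a ⊓ b + a ⊓ b = a := tsub_add_cancel_of_le inf_le_left
  have hb : b - a ⊓ b + a ⊓ b = b := tsub_add_cancel_of_le inf_le_right
  have hdisj : ∀ i, (a - a ⊓ b) i = 0 ∨ (b - a ⊓ b) i = 0 := fun i => by
    simp only [Pi.sub_apply, Pi.inf_apply]
    omega
  have hab' : revLexLt (a - a ⊓ b) (b - a ⊓ b) := by
    rwa [← revLexLt_add_right_iff (c := a ⊓ b), ha, hb]
  simpa only [ha, hb] using hr.2.2 _ _ (a ⊓ b) (rel_of_revLexLt_of_disjoint hn hr hind hdisj hab')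

end MonomialOrder

/-- If `n ≥ 4` and all induced orderings of a monomial order agree with those of
the reverse lexicographic order, then the order is the reverse lexicographic order. -/
theorem stmt_5 {n : ℕ} (hn : 4 ≤ n) (r : (Fin n → ℕ) → (Fin n → ℕ) → Prop)
    (hr : IsMonomialOrder r)
    (hind : ∀ i : Fin n, ∀ a b : Fin n → ℕ, a i = 0 → b i = 0 → (r a b ↔ revLexLt a b)) :
    ∀ a b : Fin n → ℕ, r a b ↔ revLexLt a b := by
  have := hr.1
  intro a b
  refine ⟨fun h => ?_, fun h => rel_of_revLexLt hn hr hind h⟩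
  rcases eq_or_ne a b with rfl | hne
  · exact absurd h (irrefl a)
  · exact (revLexLt_total hne).resolve_right fun h' => asymm h (rel_of_revLexLt hn hr hind h')
end

section
/- Let A be an m × n real matrix such that Ker(A) ∩ ℤ^n = {0} and in each column of A the first nonzero entry is positive. Then the relation α <_A β defined by Aα <_lex Aβ (lexicographic comparison of real vectors in ℝ^m) is a monomial order on ℕ^n. -/
open Matrix BigOperators

/-! `a ↦ toLex (A a)` is an injective additive map from `ℕⁿ` into the totally ordered group
`Lex (ℝᵐ)`, so the order it pulls back is a strict total order compatible with addition. Each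
column of `A` is nonzero (no integer kernel) with positive leading entry, hence lexicographically
positive, and a nonzero `a = ∑ aⱼ eⱼ` is mapped to a nonempty sum of such columns. -/

lemma lexLt_iff_toLex_lt_s7 {m : ℕ} {α : Type*} [LinearOrder α] {u v : Fin m → α} :
    lexLt u v ↔ toLex u < toLex v :=
  exists_congr fun _ => and_comm

lemma Pi.toLex_pos_of_leading_pos {ι α : Type*} [LinearOrder ι] [WellFoundedLT ι]
    [Zero α] [LinearOrder α] {v : ι → α} (hv : v ≠ 0)
    (hlead : ∀ i, v i ≠ 0 → (∀ k < i, v k = 0) → 0 < v i) : 0 < toLex v := by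
  refine (lt_or_gt_of_ne fun h => hv (congrArg ofLex h.symm)).resolve_right ?_
  rintro ⟨i, hbefore, hi⟩
  exact (hlead i hi.ne hbefore).not_gt hi

lemma Pi.natCast_single {ι R : Type*} [DecidableEq ι] [AddMonoidWithOne R] (j : ι) :
    (fun k => ((Pi.single j 1 : ι → ℕ) k : R)) = Pi.single j 1 := by
  funext k
  rw [Pi.apply_single (fun _ => (Nat.cast : ℕ → R)) (fun _ => Nat.cast_zero), Nat.cast_one]

theorem isMonomialOrder_of_injective {n : ℕ} {M : Type*} [AddCommMonoid M] [LinearOrder M]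
    [IsOrderedCancelAddMonoid M] (φ : (Fin n → ℕ) →+ M) (hφ : Function.Injective φ)
    (hpos : ∀ j, 0 < φ (Pi.single j 1)) : IsMonomialOrder fun a b => φ a < φ b := by
  refine ⟨?_, fun a ha => ?_, fun a b c h => ?_⟩
  · exact
      { trichotomous := fun a b hab hba => hφ ((not_lt.mp hba).antisymm (not_lt.mp hab))
        irrefl := fun a => lt_irrefl (φ a)
        trans := fun a b c => lt_trans }
  · obtain ⟨j, hj⟩ := Function.ne_iff.mp ha
    have hsum : φ a = ∑ j, a j • φ (Pi.single j 1) := by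
      conv_lhs => rw [← Finset.univ_sum_single a]
      simp only [map_sum, ← map_nsmul, ← Pi.single_smul', smul_eq_mul, mul_one]
    rw [map_zero, hsum]
    exact Finset.sum_pos' (fun j _ => nsmul_nonneg (hpos j).le _)
      ⟨j, Finset.mem_univ j, nsmul_pos (hpos j) hj⟩
  · simpa only [map_add] using add_lt_add_left h (φ c)

namespace Matrix

variable {R : Type*} [Ring R] {m n : Type*} [Fintype n] (A : Matrix m n R)

def natMulVecLex : (n → ℕ) →+ Lex (m → R) :=
  AddMonoidHom.mk' (fun a => toLex (A *ᵥ fun k => (a k : R))) fun a b => by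
    rw [← toLex_add, ← mulVec_add]
    congr 2
    funext k
    simp

lemma natMulVecLex_single [DecidableEq n] (j : n) :
    A.natMulVecLex (Pi.single j 1) = toLex (A.col j) := by
  simp only [natMulVecLex, AddMonoidHom.mk'_apply, Pi.natCast_single, mulVec_single_one]

theorem natMulVecLex_injective (hker : ∀ v : n → ℤ, A *ᵥ (fun k => (v k : R)) = 0 → v = 0) :
    Function.Injective A.natMulVecLex := by
  intro a b hab
  have hdiff : A *ᵥ (fun k => ((a k - b k : ℤ) : R)) = 0 := by
    have := congrArg ofLex hab
    simp only [natMulVecLex, AddMonoidHom.mk'_apply, ofLex_toLex] at this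
    simp [Int.cast_sub, ← Pi.sub_def, mulVec_sub, this]
  funext k
  simpa [sub_eq_zero] using congrFun (hker _ hdiff) k

theorem natMulVecLex_single_pos [DecidableEq n] [LinearOrder m] [WellFoundedLT m] [LinearOrder R]
    (hker : ∀ v : n → ℤ, A *ᵥ (fun k => (v k : R)) = 0 → v = 0)
    (hcol : ∀ j i, A i j ≠ 0 → (∀ k < i, A k j = 0) → 0 < A i j) (j : n) :
    0 < A.natMulVecLex (Pi.single j 1) := by
  have hne : A.natMulVecLex (Pi.single j 1) ≠ 0 := by
    rw [← map_zero A.natMulVecLex]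
    exact (A.natMulVecLex_injective hker).ne (Pi.single_ne_zero_iff.mpr one_ne_zero)
  rw [natMulVecLex_single] at hne ⊢
  exact Pi.toLex_pos_of_leading_pos (fun h => hne (congrArg toLex h)) (hcol j)

end Matrix

/-- If `A` is a real `m × n` matrix with `Ker(A) ∩ ℤⁿ = {0}` whose columns each have
positive first nonzero entry, then `α < β ↔ Aα <_lex Aβ` is a monomial order on `ℕⁿ`. -/
theorem stmt_7 {m n : ℕ} (A : Matrix (Fin m) (Fin n) ℝ)
    (hker : ∀ v : Fin n → ℤ, A.mulVec (fun k => (v k : ℝ)) = 0 → v = 0)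
    (hcol : ∀ j : Fin n, ∀ i : Fin m, A i j ≠ 0 → (∀ k : Fin m, k < i → A k j = 0) →
      0 < A i j) :
    IsMonomialOrder (fun a b : Fin n → ℕ =>
      lexLt (A.mulVec fun k => (a k : ℝ)) (A.mulVec fun k => (b k : ℝ))) := by
  simp only [lexLt_iff_toLex_lt_s7]
  exact isMonomialOrder_of_injective A.natMulVecLex (A.natMulVecLex_injective hker)
    (A.natMulVecLex_single_pos hker hcol)
end

section
/- Fix n ≥ 4 and C_n as defined. For 1 ≤ i ≤ n let C_{n,i} be the (n−1) × (n−1) matrix obtained from C_n by deleting the i-th column and the n-th row. Then det(C_{n,1}) = (−1)^n, det(C_{n,i}) = (−1)^{n+i} for 2 ≤ i ≤ n−2, det(C_{n,n−1}) = −2n, and det(C_{n,n}) = 4 − 3n; in particular all are nonzero. -/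
open Matrix BigOperators

/-- The matrix `C_n` from the paper. -/
def Cmat (n : ℕ) : Matrix (Fin n) (Fin n) ℤ := Matrix.of fun i j =>
  if i.val = 0 then 1
  else if i.val = n - 1 then (if j.val = n - 1 then 1 else 0)
  else if i.val = n - 2 then
    (if j.val = 0 then ((n : ℤ) ^ 2 + n + 2) / 2 else (n : ℤ) - j.val)
  else if j.val = 0 ∨ j = i then 1 else 0

/-- The matrix `D_n` from the paper. -/
def Dmat (n : ℕ) : Matrix (Fin n) (Fin n) ℤ := Matrix.of fun i j =>
  if i.val = 0 then 1
  else if i.val = n - 1 then (if j.val = n - 1 then 1 else 0)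
  else if i.val = n - 2 then
    (if j.val = 0 then ((n : ℤ) ^ 2 - n) / 2
     else if j.val = n - 3 then 2
     else if j.val = n - 2 then 3
     else if j.val = n - 1 then 1
     else (n : ℤ) - j.val)
  else if j.val = 0 ∨ j = i then 1 else 0

/-- The embedding `Fin (n-1) → Fin n` skipping index `i` (used to delete the `i`-th column). -/
def delCol (n : ℕ) (i : Fin n) (j : Fin (n - 1)) : Fin n :=
  if j.val < i.val then ⟨j.val, lt_of_lt_of_le j.isLt (Nat.sub_le n 1)⟩
  else ⟨j.val + 1, by have h1 := j.isLt; have h2 := i.isLt; omega⟩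

/-- The embedding `Fin (n-1) → Fin n` keeping the first `n-1` indices
(used to delete the `n`-th row). -/
def keepRow (n : ℕ) (k : Fin (n - 1)) : Fin n :=
  ⟨k.val, lt_of_lt_of_le k.isLt (Nat.sub_le n 1)⟩

/-- `C_{n,i}`: delete the `i`-th column and the `n`-th row of `C_n`. -/
def Csub (n : ℕ) (i : Fin n) : Matrix (Fin (n - 1)) (Fin (n - 1)) ℤ :=
  (Cmat n).submatrix (keepRow n) (delCol n i)

/-- `D_{n,i}`: delete the `i`-th column and the `n`-th row of `D_n`. -/
def Dsub (n : ℕ) (i : Fin n) : Matrix (Fin (n - 1)) (Fin (n - 1)) ℤ :=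
  (Dmat n).submatrix (keepRow n) (delCol n i)

/-!
Write `C = C_n` and `e` for the last standard basis vector. The vector
`v = (-1, 1, …, 1, 2n, 4 - 3n)` satisfies `C v = (4 - 3n) e`. On the other hand the last column
`x` of `adj C` satisfies `C x = (det C) e`, and expanding along the deleted last row,
`x_i = ± det C_{n,i}`. So once `det C = 4 - 3n ≠ 0`, multiplying by `adj C` gives `x = v`, and the
determinants are read off from `v`.

For `det C`: `C - 1` has rank three (its nonzero rows are row 1, row `n - 1` and copies of
`e_1`), so `C = 1 + U V` with `U` of size `n × 3`, and the Weinstein–Aronszajn identity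
`det (1 + U V) = det (1 + V U)` reduces it to a `3 × 3` determinant.
-/

open Finset

namespace Matrix

variable {R ι : Type*} [CommRing R]

theorem det_submatrix_castSucc_succAbove {N : ℕ} (A : Matrix (Fin (N + 1)) (Fin (N + 1)) R)
    (i : Fin (N + 1)) :
    (A.submatrix Fin.castSucc i.succAbove).det =
      (-1) ^ (N + i : ℕ) * adjugate A i (Fin.last N) := by
  rw [adjugate_fin_succ_eq_det_submatrix, Fin.succAbove_last, ← mul_assoc, ← pow_add,
    Fin.val_last, Even.neg_one_pow ⟨N + i, rfl⟩, one_mul]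

variable [IsDomain R] [Fintype ι] [DecidableEq ι]

theorem adjugate_col_eq_of_mulVec_eq_single {A : Matrix ι ι R} (hA : A.det ≠ 0) {j : ι}
    {v : ι → R} (hv : A *ᵥ v = Pi.single j A.det) : (fun i => adjugate A i j) = v := by
  have h : A.det • v = A.det • fun i => adjugate A i j :=
    calc A.det • v = adjugate A *ᵥ (A *ᵥ v) := by
          rw [mulVec_mulVec, adjugate_mul, smul_mulVec, one_mulVec]
      _ = A.det • fun i => adjugate A i j := by
          rw [hv, mulVec_single]
          ext i
          simp [mul_comm]
  exact (smul_right_injective _ hA h).symm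

end Matrix

theorem Fin.sum_univ_add_four_split {M : Type*} [AddCommMonoid M] (m : ℕ) (f : ℕ → M) :
    ∑ j : Fin (m + 4), f j = f 0 + ∑ k ∈ range (m + 1), f (k + 1) + f (m + 2) + f (m + 3) := by
  rw [Fin.sum_univ_eq_sum_range f, sum_range_succ, sum_range_succ, sum_range_succ',
    add_comm (f 0)]

theorem Csub_succ (N : ℕ) (i : Fin (N + 1)) :
    Csub (N + 1) i = (Cmat (N + 1)).submatrix Fin.castSucc i.succAbove :=
  rfl

namespace Cmat

variable (m : ℕ)

theorem row_zero : Cmat (m + 4) 0 = 1 :=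
  rfl

theorem row_of_mid {i : Fin (m + 4)} (hi₁ : 1 ≤ i.val) (hi₂ : i.val ≤ m + 1) :
    Cmat (m + 4) i = Pi.single 0 1 + Pi.single i 1 := by
  ext j
  simp only [Cmat, of_apply, Pi.add_apply, Pi.single_apply]
  rw [if_neg (by omega), if_neg (by omega), if_neg (by omega)]
  by_cases h0 : j = 0
  · simp [h0, Fin.ext_iff]
    omega
  · simp [h0, Fin.ext_iff] at *

def penultMidSum : ℤ :=
  ∑ k ∈ range (m + 1), ((m : ℤ) + 3 - k)

/-- The corner entry `(n² + n + 2) / 2` is `n + 4` more than the sum of the middle entries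
`n - j` of its row. -/
theorem row_penult_apply (j : Fin (m + 4)) :
    Cmat (m + 4) ⟨m + 2, by omega⟩ j =
      if j.val = 0 then penultMidSum m + (m + 8) else (m + 4 : ℤ) - j.val := by
  simp only [Cmat, of_apply]
  rw [if_neg (by omega), if_neg (by omega), if_pos (by omega)]
  split_ifs
  · have hgauss : (∑ k ∈ range (m + 1), (k : ℤ)) * 2 = (m + 1) * m := by
      have := congrArg (Nat.cast (R := ℤ)) (sum_range_id_mul_two (m + 1))
      push_cast at this
      simpa using this
    rw [penultMidSum, sum_sub_distrib, sum_const, card_range, nsmul_eq_mul]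
    apply Int.ediv_eq_of_eq_mul_left two_ne_zero
    push_cast
    linear_combination hgauss
  · push_cast
    ring

theorem row_last : Cmat (m + 4) (Fin.last _) = Pi.single (Fin.last _) 1 := by
  ext j
  simp only [Cmat, of_apply, Fin.val_last, Pi.single_apply, Fin.ext_iff]
  rw [if_neg (by omega), if_pos (by omega)]
  simp

def lastCofactor (j : ℕ) : ℤ :=
  if j = 0 then -1
  else if j = m + 2 then 2 * (m + 4)
  else if j = m + 3 then 4 - 3 * (m + 4)
  else 1

theorem lastCofactor_of_mid {j : ℕ} (h₁ : 1 ≤ j) (h₂ : j ≤ m + 1) : lastCofactor m j = 1 := by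
  simp only [lastCofactor]
  rw [if_neg (by omega), if_neg (by omega), if_neg (by omega)]

theorem lastCofactor_ne_zero {j : ℕ} : lastCofactor m j ≠ 0 := by
  unfold lastCofactor
  split_ifs <;> omega

theorem mulVec_lastCofactor :
    Cmat (m + 4) *ᵥ (fun j => lastCofactor m j) =
      Pi.single (Fin.last _) (4 - 3 * (m + 4 : ℤ)) := by
  ext r
  obtain hr | hr | hr | hr :
      r.val = 0 ∨ (1 ≤ r.val ∧ r.val ≤ m + 1) ∨ r.val = m + 2 ∨ r.val = m + 3 := by omega
  · obtain rfl : r = 0 := Fin.ext hr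
    have hmid : ∀ k ∈ range (m + 1), lastCofactor m (k + 1) = 1 := fun k hk =>
      lastCofactor_of_mid m (by omega) (by simp at hk; omega)
    rw [mulVec, row_zero, one_dotProduct, Fin.sum_univ_add_four_split m (lastCofactor m),
      Pi.single_eq_of_ne (Fin.ne_of_val_ne (by simp)), sum_congr rfl hmid]
    simp [lastCofactor]
    ring
  · rw [mulVec, row_of_mid m hr.1 hr.2, add_dotProduct, single_dotProduct, single_dotProduct,
      Pi.single_eq_of_ne (Fin.ne_of_val_ne (by simp; omega)), lastCofactor_of_mid m hr.1 hr.2]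
    simp [lastCofactor]
  · set S := penultMidSum m + (m + 8)
    have hmid : ∀ k ∈ range (m + 1),
        (if k + 1 = 0 then S else (m : ℤ) + 4 - (k + 1 : ℕ)) * lastCofactor m (k + 1) =
          m + 3 - k := fun k hk => by
      rw [lastCofactor_of_mid m (by omega) (by simp at hk; omega), if_neg (by omega)]
      push_cast
      ring
    rw [show r = ⟨m + 2, by omega⟩ from Fin.ext hr, mulVec, dotProduct,
      Pi.single_eq_of_ne (Fin.ne_of_val_ne (by simp))]
    simp only [row_penult_apply]
    rw [Fin.sum_univ_add_four_split m
        (fun j => (if j = 0 then S else (m : ℤ) + 4 - j) * lastCofactor m j),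
      sum_congr rfl hmid]
    simp [lastCofactor, S, penultMidSum]
    ring
  · obtain rfl : r = Fin.last _ := Fin.ext hr
    rw [mulVec, row_last, single_dotProduct, Pi.single_eq_same]
    simp [lastCofactor]

def midCols : Fin (m + 4) → ℤ :=
  fun j => if 1 ≤ j.val ∧ j.val ≤ m + 1 then 1 else 0

theorem sum_midCols : ∑ j, midCols m j = m + 1 := by
  rw [show midCols m = fun j => if 1 ≤ j.val ∧ j.val ≤ m + 1 then 1 else 0 from rfl,
    Fin.sum_univ_add_four_split m (fun j => if 1 ≤ j ∧ j ≤ m + 1 then (1 : ℤ) else 0),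
    sum_congr rfl (g := fun _ => 1) (fun k hk => by simp at hk; rw [if_pos (by omega)])]
  simp

theorem row_penult_dotProduct_midCols :
    Cmat (m + 4) ⟨m + 2, by omega⟩ ⬝ᵥ midCols m = penultMidSum m := by
  set S := penultMidSum m + (m + 8)
  have hmid : ∀ k ∈ range (m + 1), (if k + 1 = 0 then S else (m : ℤ) + 4 - (k + 1 : ℕ)) *
      (if 1 ≤ k + 1 ∧ k + 1 ≤ m + 1 then 1 else 0) = m + 3 - k := fun k hk => by
    simp at hk
    rw [if_neg (by omega), if_pos (by omega)]
    push_cast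
    ring
  simp only [dotProduct, row_penult_apply, midCols]
  rw [Fin.sum_univ_add_four_split m (fun j => (if j = 0 then S else (m : ℤ) + 4 - j) *
    if 1 ≤ j ∧ j ≤ m + 1 then 1 else 0), sum_congr rfl hmid]
  simp [penultMidSum]

def lowRankLeft : Matrix (Fin (m + 4)) (Fin 3) ℤ :=
  (of ![midCols m, Pi.single 0 1, Pi.single ⟨m + 2, by omega⟩ 1])ᵀ

def lowRankRight : Matrix (Fin 3) (Fin (m + 4)) ℤ :=
  ![Pi.single 0 1, Cmat (m + 4) 0 - Pi.single 0 1,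
    Cmat (m + 4) ⟨m + 2, by omega⟩ - Pi.single ⟨m + 2, by omega⟩ 1]

theorem eq_one_add_lowRankLeft_mul_lowRankRight :
    Cmat (m + 4) = 1 + lowRankLeft m * lowRankRight m := by
  ext i j
  rw [Matrix.add_apply, Matrix.mul_apply, Fin.sum_univ_three]
  simp only [lowRankLeft, lowRankRight, transpose_apply, of_apply, cons_val_zero, cons_val_one,
    cons_val_two, vecHead, vecTail, Pi.sub_apply, Pi.single_apply, one_apply, midCols]
  have hp : (⟨m + 2, by omega⟩ : Fin (m + 4)) ≠ 0 := Fin.ne_of_val_ne (by simp)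
  obtain hi | hi | hi | hi :
      i.val = 0 ∨ (1 ≤ i.val ∧ i.val ≤ m + 1) ∨ i.val = m + 2 ∨ i.val = m + 3 := by omega
  · obtain rfl : i = 0 := Fin.ext hi
    by_cases hj : j = 0 <;> simp [hj, hp.symm, eq_comm]
  · have hi0 : i ≠ 0 := by rintro rfl; simp at hi
    have hip : i ≠ ⟨m + 2, by omega⟩ := fun h => by simp [h] at hi
    rw [row_of_mid m hi.1 hi.2]
    by_cases hj : j = 0 <;> simp [hj, hi0, hip, hi, Pi.single_apply, eq_comm]
  · rw [show i = ⟨m + 2, by omega⟩ from Fin.ext hi]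
    simp [hp, Pi.single_apply, eq_comm]
  · obtain rfl : i = Fin.last _ := Fin.ext hi
    have h0 : Fin.last (m + 3) ≠ 0 := Fin.ne_of_val_ne (by simp)
    have hp' : Fin.last (m + 3) ≠ ⟨m + 2, by omega⟩ := Fin.ne_of_val_ne (by simp)
    simp [row_last, h0, hp', Pi.single_apply, eq_comm]

theorem one_add_lowRankRight_mul_lowRankLeft :
    1 + lowRankRight m * lowRankLeft m =
      !![1, 1, 0; (m : ℤ) + 1, 1, 1; penultMidSum m, penultMidSum m + (m + 8), 2] := by
  have h0 : midCols m 0 = 0 := by simp [midCols]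
  have hp : midCols m ⟨m + 2, by omega⟩ = 0 := by simp [midCols]
  ext l l'
  rw [Matrix.add_apply, Matrix.mul_apply']
  simp only [lowRankLeft, lowRankRight, transpose_apply, of_apply]
  fin_cases l <;> fin_cases l' <;>
    simp [sub_dotProduct, row_zero, one_dotProduct, dotProduct_single, sum_midCols,
      row_penult_dotProduct_midCols, h0, hp, row_penult_apply]

theorem det_eq : (Cmat (m + 4)).det = 4 - 3 * (m + 4) := by
  rw [eq_one_add_lowRankLeft_mul_lowRankRight, det_one_add_mul_comm,
    one_add_lowRankRight_mul_lowRankLeft, det_fin_three]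
  simp
  ring

theorem adjugate_apply_last (i : Fin (m + 4)) :
    adjugate (Cmat (m + 4)) i (Fin.last _) = lastCofactor m i := by
  have hdet : (Cmat (m + 4)).det ≠ 0 := by rw [det_eq]; omega
  refine congrFun (adjugate_col_eq_of_mulVec_eq_single (j := Fin.last _)
    (v := fun j => lastCofactor m j) hdet ?_) i
  rw [det_eq, mulVec_lastCofactor]

theorem det_Csub (i : Fin (m + 4)) :
    (Csub (m + 4) i).det = (-1) ^ (m + 3 + i : ℕ) * lastCofactor m i := by
  rw [Csub_succ, det_submatrix_castSucc_succAbove, adjugate_apply_last]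

end Cmat

/-- `i` is 0-indexed: `i.val = 0` is the paper's `i = 1`. -/
theorem stmt_13 {n : ℕ} (hn : 4 ≤ n) (i : Fin n) :
    (Csub n i).det ≠ 0 ∧
    (i.val = 0 → (Csub n i).det = (-1) ^ n) ∧
    (1 ≤ i.val → i.val ≤ n - 3 → (Csub n i).det = (-1) ^ (n + i.val + 1)) ∧
    (i.val = n - 2 → (Csub n i).det = -2 * n) ∧
    (i.val = n - 1 → (Csub n i).det = 4 - 3 * n) := by
  obtain ⟨m, rfl⟩ : ∃ m, n = m + 4 := ⟨n - 4, by omega⟩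
  simp only [Cmat.det_Csub]
  refine ⟨mul_ne_zero (pow_ne_zero _ (by norm_num)) (Cmat.lastCofactor_ne_zero m),
    fun hi => ?_, fun hi₁ hi₂ => ?_, fun hi => ?_, fun hi => ?_⟩
  · simp [hi, Cmat.lastCofactor]
    ring
  · rw [Cmat.lastCofactor_of_mid m hi₁ (by omega)]
    ring
  · rw [hi, show m + 4 - 2 = m + 2 by omega, Odd.neg_one_pow ⟨m + 2, by ring⟩]
    simp [Cmat.lastCofactor]
  · rw [hi, show m + 4 - 1 = m + 3 by omega, Even.neg_one_pow ⟨m + 3, by ring⟩]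
    simp [Cmat.lastCofactor]
end
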